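/- Every simple k[G̃]-module is isomorphic to a direct summand of an induced simple module: for every simple k[G̃]-module T there exists a simple k[G]-module s such that T is a direct summand of Ind_G^{G̃} s. -/

import Mathlib

/-!
STATEMENT 4: Every simple `k[G̃]`-module is isomorphic to a direct summand of an induced
simple module: for every simple `k[G̃]`-module `T` there exists a simple `k[G]`-module `s`
such that `T` is a direct summand of `Ind_G^{G̃} s`.

Context: `k` is an algebraically closed field of prime characteristic `p`; `G̃` is a
finite group with a normal subgroup `G` such that `G̃/G` has order coprime to `p`.
The induced module `Ind_G^{G̃} s = k[G̃] ⊗_{k[G]} s` is realised as the quotient of the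
`k`-tensor product `k[G̃] ⊗_k s` by the `k[G̃]`-submodule generated by the balancing
relations.  `T` is a direct summand of `Ind_G^{G̃} s` iff there are `k[G̃]`-linear maps
`ι : T → Ind_G^{G̃} s` and `π : Ind_G^{G̃} s → T` with `π ∘ ι = id`.
-/

open MonoidAlgebra

/-- The submodule of balancing relations defining `k[G̃] ⊗_{k[G]} S` inside
`k[G̃] ⊗_k S`. -/
noncomputable def IndRel (k : Type*) [Field k] {Gt : Type*} [Group Gt] (G : Subgroup Gt)
    (S : Type*) [AddCommGroup S] [Module k S] [Module (MonoidAlgebra k ↥G) S]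
    [IsScalarTower k (MonoidAlgebra k ↥G) S] :
    Submodule (MonoidAlgebra k Gt) (TensorProduct k (MonoidAlgebra k Gt) S) :=
  Submodule.span (MonoidAlgebra k Gt)
    {z | ∃ (x : MonoidAlgebra k Gt) (a : MonoidAlgebra k ↥G) (s : S),
      z = (x * mapDomainRingHom k G.subtype a) ⊗ₜ[k] s - x ⊗ₜ[k] (a • s)}

/-- The induced module `Ind_G^{G̃} S = k[G̃] ⊗_{k[G]} S`, a `k[G̃]`-module. -/
noncomputable def Ind (k : Type*) [Field k] {Gt : Type*} [Group Gt] (G : Subgroup Gt)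
    (S : Type*) [AddCommGroup S] [Module k S] [Module (MonoidAlgebra k ↥G) S]
    [IsScalarTower k (MonoidAlgebra k ↥G) S] :=
  TensorProduct k (MonoidAlgebra k Gt) S ⧸ IndRel k G S

noncomputable instance (k : Type*) [Field k] {Gt : Type*} [Group Gt] (G : Subgroup Gt)
    (S : Type*) [AddCommGroup S] [Module k S] [Module (MonoidAlgebra k ↥G) S]
    [IsScalarTower k (MonoidAlgebra k ↥G) S] : AddCommGroup (Ind k G S) :=
  Submodule.Quotient.addCommGroup _

noncomputable instance (k : Type*) [Field k] {Gt : Type*} [Group Gt] (G : Subgroup Gt)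
    (S : Type*) [AddCommGroup S] [Module k S] [Module (MonoidAlgebra k ↥G) S]
    [IsScalarTower k (MonoidAlgebra k ↥G) S] : Module (MonoidAlgebra k Gt) (Ind k G S) :=
  Submodule.Quotient.module _

/-!
Restricted to the normal subgroup `G`, the simple module `T` is semisimple (Clifford), so `id_T`
is a sum of endomorphisms `j ∘ q` factoring through simple `k[G]`-submodules. The relative trace
`e ↦ ∑_{xG} x e x⁻¹` sends `id_T` to `[G̃ : G] • id_T ≠ 0`, hence is nonzero on one such `j ∘ q`.
With `ι t = ∑_{xG} x ⊗ q (x⁻¹ t)` and `π (x ⊗ v) = x • j v`, that relative trace is `π ∘ ι`: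
a nonzero endomorphism of the simple module `T`, so an automorphism by Schur's lemma.
-/
theorem IsSemisimpleModule.id_mem_closure_subtype_comp {R M : Type*} [Ring R] [AddCommGroup M]
    [Module R M] [IsSemisimpleModule R M] [IsArtinian R M] :
    LinearMap.id ∈ AddSubmonoid.closure {f : M →ₗ[R] M |
      ∃ (m : Submodule R M) (q : M →ₗ[R] m), IsSimpleModule R m ∧ m.subtype ∘ₗ q = f} := by
  suffices ∀ W : Submodule R M, ∀ f : M →ₗ[R] M, LinearMap.range f ≤ W →
      f ∈ AddSubmonoid.closure {f : M →ₗ[R] M |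
        ∃ (m : Submodule R M) (q : M →ₗ[R] m), IsSimpleModule R m ∧ m.subtype ∘ₗ q = f} from
    this ⊤ _ le_top
  intro W
  induction W using WellFoundedLT.induction with
  | _ W ih =>
  intro f hf
  obtain rfl | ⟨m, hm, hmW⟩ := eq_bot_or_exists_atom_le W
  · rw [(LinearMap.range_le_bot_iff f).1 hf]
    exact zero_mem _
  obtain ⟨D, hmD⟩ := exists_isCompl m
  have hlt : W ⊓ D < W := inf_le_left.lt_of_ne fun h =>
    hm.1 (hmD.disjoint.eq_bot_of_le (hmW.trans (h ▸ inf_le_right)))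
  rw [← add_sub_cancel (m.projection D hmD ∘ₗ f) f]
  refine add_mem (AddSubmonoid.subset_closure
    ⟨m, m.projectionOnto D hmD ∘ₗ f, isSimpleModule_iff_isAtom.2 hm, rfl⟩) (ih _ hlt _ ?_)
  rintro _ ⟨x, rfl⟩
  exact ⟨sub_mem (hf ⟨x, rfl⟩) (hmW (m.projection_apply_mem hmD (f x))),
    m.sub_projection_mem hmD (f x)⟩

theorem QuotientGroup.sum_out_mul_left {α A : Type*} [Group α] [AddCommMonoid A] {s : Subgroup α}
    [Fintype (α ⧸ s)] (φ : α → A) (hφ : ∀ x, ∀ g ∈ s, φ (x * g) = φ x) (y : α) :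
    ∑ c : α ⧸ s, φ (y * c.out) = ∑ c : α ⧸ s, φ c.out := by
  rw [← Equiv.sum_comp (MulAction.toPerm y) fun c : α ⧸ s => φ c.out]
  refine Finset.sum_congr rfl fun c _ => ?_
  obtain ⟨g, hg⟩ := QuotientGroup.mk_out_eq_mul s (y * c.out)
  rw [MulAction.toPerm_apply, ← MulAction.Quotient.mk_smul_out, smul_eq_mul, hg, hφ _ _ g.2]

section Clifford

variable {k : Type*} [Field k] {Gt : Type*} [Group Gt] {G : Subgroup Gt} [G.Normal]

theorem MonoidAlgebra.of_mul_mapDomainRingHom_subtype (x : Gt) (a : MonoidAlgebra k G) :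
    of k Gt x * mapDomainRingHom k G.subtype a =
      mapDomainRingHom k G.subtype (mapDomainRingEquiv k (MulAut.conjNormal x) a) * of k Gt x := by
  induction a using MonoidAlgebra.induction_linear with
  | zero => simp
  | add a b ha hb => simp only [map_add, mul_add, add_mul, ha, hb]
  | single g c =>
    simp only [of_apply, mapDomainRingHom_apply, Subgroup.coe_subtype, mapDomain_single,
      single_mul_single, one_mul, mapDomainRingEquiv_single, MulAut.conjNormal_apply,
      inv_mul_cancel_right, mul_one]

attribute [local instance] RingHomInvPair.of_ringEquiv RingHomInvPair.of_ringEquiv_symm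

variable {T : Type*} [AddCommGroup T] [Module (MonoidAlgebra k Gt) T]
  [Module (MonoidAlgebra k G) T]
  (hres : ∀ (a : MonoidAlgebra k G) (t : T), a • t = mapDomainRingHom k G.subtype a • t)
include hres

noncomputable def conjSMul (x : Gt) :
    T ≃ₛₗ[((mapDomainRingEquiv k (MulAut.conjNormal x) : MonoidAlgebra k G ≃+* MonoidAlgebra k G) :
      MonoidAlgebra k G →+* MonoidAlgebra k G)] T where
  toFun t := of k Gt x • t
  invFun t := of k Gt x⁻¹ • t
  map_add' := smul_add _
  map_smul' a t := by
    rw [RingHom.coe_coe, hres, hres, ← mul_smul, ← mul_smul, of_mul_mapDomainRingHom_subtype]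
  left_inv t := by simp only [← mul_smul, ← map_mul, inv_mul_cancel, map_one, one_smul]
  right_inv t := by simp only [← mul_smul, ← map_mul, mul_inv_cancel, map_one, one_smul]

theorem isAtom_map_conjSMul (x : Gt) {m : Submodule (MonoidAlgebra k G) T} (hm : IsAtom m) :
    IsAtom (m.map (conjSMul hres x).toLinearMap) :=
  ((Submodule.orderIsoMapComap (conjSMul hres x)).isAtom_iff m).2 hm

/-- Clifford's theorem. -/
theorem isSemisimpleModule_restrict [Module k T] [IsScalarTower k (MonoidAlgebra k Gt) T]
    [IsScalarTower k (MonoidAlgebra k G) T] [IsSimpleModule (MonoidAlgebra k Gt) T]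
    [IsArtinian (MonoidAlgebra k G) T] : IsSemisimpleModule (MonoidAlgebra k G) T := by
  let U := sSup {m : Submodule (MonoidAlgebra k G) T | IsSimpleModule (MonoidAlgebra k G) m}
  have hU (x : Gt) : U ≤ U.comap (conjSMul hres x).toLinearMap :=
    sSup_le fun m hm => Submodule.map_le_iff_le_comap.1 <| le_sSup <|
      isSimpleModule_iff_isAtom.2 (isAtom_map_conjSMul hres x (isSimpleModule_iff_isAtom.1 hm))
  have := IsSimpleModule.nontrivial (MonoidAlgebra k Gt) T
  obtain ⟨m, hm, -⟩ :=
    (eq_bot_or_exists_atom_le (⊤ : Submodule (MonoidAlgebra k G) T)).resolve_left top_ne_bot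
  obtain ⟨t, htm, ht⟩ := Submodule.exists_mem_ne_zero_of_ne_bot hm.1
  -- `U` is stable under `Gt`, hence a nonzero `k[Gt]`-submodule of the simple module `T`.
  let UGt := submoduleOfSMulMem (U.restrictScalars k) fun x _ hu => hU x hu
  have hmU : m ≤ U := le_sSup (isSimpleModule_iff_isAtom.2 hm)
  have htU : t ∈ UGt := hmU htm
  have hUGt : UGt = ⊤ :=
    (eq_bot_or_eq_top UGt).resolve_left fun h => ht ((Submodule.mem_bot _).1 (h ▸ htU))
  exact .of_sSup_simples_eq_top (eq_top_iff.2 fun t _ => (hUGt ▸ Submodule.mem_top : t ∈ UGt))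

end Clifford

section RelTrace

variable {k : Type*} [Field k] {Gt : Type*} [Group Gt] {G : Subgroup Gt} [Fintype (Gt ⧸ G)]
  {T : Type*} [AddCommGroup T] [Module (MonoidAlgebra k Gt) T] [Module (MonoidAlgebra k G) T]

variable (k G) in
/-- The relative trace `Tr_G^{Gt}`. -/
noncomputable def relTrace : (T →ₗ[MonoidAlgebra k G] T) →+ (T → T) where
  toFun e t := ∑ c : Gt ⧸ G, of k Gt c.out • e (of k Gt c.out⁻¹ • t)
  map_zero' := by ext; simp
  map_add' e e' := by ext; simp [Finset.sum_add_distrib]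

theorem relTrace_apply (e : T →ₗ[MonoidAlgebra k G] T) (t : T) :
    relTrace k G e t = ∑ c : Gt ⧸ G, of k Gt c.out • e (of k Gt c.out⁻¹ • t) := rfl

theorem relTrace_id_apply (t : T) : relTrace k G LinearMap.id t = Nat.card (Gt ⧸ G) • t := by
  rw [relTrace_apply, Nat.card_eq_fintype_card, ← Finset.card_univ, ← Finset.sum_const]
  refine Finset.sum_congr rfl fun c _ => ?_
  rw [LinearMap.id_apply, ← mul_smul, ← map_mul, mul_inv_cancel, map_one, one_smul]

theorem relTrace_id_ne_zero [Module k T] [Nontrivial T] (h : (Nat.card (Gt ⧸ G) : k) ≠ 0) :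
    relTrace k G (LinearMap.id : T →ₗ[MonoidAlgebra k G] T) ≠ 0 := by
  obtain ⟨t, ht⟩ := exists_ne (0 : T)
  intro h0
  have := congrFun h0 t
  rw [relTrace_id_apply, ← Nat.cast_smul_eq_nsmul k] at this
  exact smul_ne_zero h ht this

theorem exists_relTrace_subtype_comp_ne_zero [IsSemisimpleModule (MonoidAlgebra k G) T]
    [IsArtinian (MonoidAlgebra k G) T] (h : relTrace k G (LinearMap.id : T →ₗ[_] T) ≠ 0) :
    ∃ (s : Submodule (MonoidAlgebra k G) T) (q : T →ₗ[MonoidAlgebra k G] s),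
      IsSimpleModule (MonoidAlgebra k G) s ∧ relTrace k G (s.subtype ∘ₗ q) ≠ 0 := by
  by_contra! h'
  refine h (AddSubmonoid.closure_le (S := AddMonoidHom.mker (relTrace k G)).2 ?_
    IsSemisimpleModule.id_mem_closure_subtype_comp)
  rintro _ ⟨s, q, hs, rfl⟩
  exact h' s q hs

end RelTrace

section Induction

variable {k : Type*} [Field k] {Gt : Type*} [Group Gt] {G : Subgroup Gt}
  {S : Type*} [AddCommGroup S] [Module k S] [Module (MonoidAlgebra k G) S]
  [IsScalarTower k (MonoidAlgebra k G) S]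

noncomputable instance : Module k (Ind k G S) := Submodule.Quotient.module' _

instance : IsScalarTower k (MonoidAlgebra k Gt) (Ind k G S) := Submodule.Quotient.isScalarTower _ _

namespace Ind

noncomputable def mk : TensorProduct k (MonoidAlgebra k Gt) S →ₗ[MonoidAlgebra k Gt] Ind k G S :=
  (IndRel k G S).mkQ

theorem mk_mul_tmul (x : MonoidAlgebra k Gt) (a : MonoidAlgebra k G) (v : S) :
    mk ((x * mapDomainRingHom k G.subtype a) ⊗ₜ[k] v) = (mk (x ⊗ₜ[k] (a • v)) : Ind k G S) :=
  (Submodule.Quotient.eq _).2 (Submodule.subset_span ⟨x, a, v, rfl⟩)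

variable {T : Type*} [AddCommGroup T] [Module (MonoidAlgebra k Gt) T] [Module k T]
  [IsScalarTower k (MonoidAlgebra k Gt) T] [Module (MonoidAlgebra k G) T]
  [IsScalarTower k (MonoidAlgebra k G) T]

noncomputable def cosetTerm (q : T →ₗ[MonoidAlgebra k G] S) (x : Gt) : T →ₗ[k] Ind k G S :=
  mk.restrictScalars k ∘ₗ TensorProduct.mk k (MonoidAlgebra k Gt) S (of k Gt x) ∘ₗ
    q.restrictScalars k ∘ₗ DistribSMul.toLinearMap k T (of k Gt x⁻¹)

theorem cosetTerm_apply (q : T →ₗ[MonoidAlgebra k G] S) (x : Gt) (t : T) :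
    cosetTerm q x t = mk (of k Gt x ⊗ₜ[k] q (of k Gt x⁻¹ • t)) := rfl

theorem cosetTerm_smul (q : T →ₗ[MonoidAlgebra k G] S) (x y : Gt) (t : T) :
    cosetTerm q x (of k Gt y • t) = of k Gt y • cosetTerm q (y⁻¹ * x) t := by
  rw [cosetTerm_apply, cosetTerm_apply, ← map_smul, TensorProduct.smul_tmul', smul_eq_mul,
    ← map_mul, mul_inv_cancel_left, ← mul_smul, ← map_mul, mul_inv_rev, inv_inv]

variable (hres : ∀ (a : MonoidAlgebra k G) (t : T), a • t = mapDomainRingHom k G.subtype a • t)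
include hres

noncomputable def lift (j : S →ₗ[MonoidAlgebra k G] T) : Ind k G S →ₗ[MonoidAlgebra k Gt] T :=
  (IndRel k G S).liftQ
    (TensorProduct.AlgebraTensorModule.lift
      (LinearMap.toSpanSingleton (MonoidAlgebra k Gt) _ (j.restrictScalars k))) <| by
    rw [IndRel, Submodule.span_le]
    rintro _ ⟨x, a, v, rfl⟩
    simp [hres, mul_smul]

theorem lift_mk (j : S →ₗ[MonoidAlgebra k G] T) (x : MonoidAlgebra k Gt) (v : S) :
    lift hres j (mk (x ⊗ₜ[k] v)) = x • j v :=
  rfl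

theorem cosetTerm_mul_of_mem (q : T →ₗ[MonoidAlgebra k G] S) (x : Gt) {g : Gt} (hg : g ∈ G) :
    cosetTerm q (x * g) = cosetTerm q x := by
  ext t
  have hg' : mapDomainRingHom k G.subtype (of k G ⟨g, hg⟩) = of k Gt g := by simp
  rw [cosetTerm_apply, cosetTerm_apply, map_mul (of k Gt) x g, ← hg', mk_mul_tmul, ← map_smul,
    hres, hg', ← mul_smul, ← map_mul, mul_inv_rev, mul_inv_cancel_left]

variable [Fintype (Gt ⧸ G)]

noncomputable def cosetSum (q : T →ₗ[MonoidAlgebra k G] S) : T →ₗ[MonoidAlgebra k Gt] Ind k G S :=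
  equivariantOfLinearOfComm (∑ c : Gt ⧸ G, cosetTerm q c.out) fun y t => by
    simp only [← of_apply, LinearMap.sum_apply, cosetTerm_smul, ← Finset.smul_sum]
    rw [QuotientGroup.sum_out_mul_left (fun x => cosetTerm q x t)
      (fun x g hg => by rw [cosetTerm_mul_of_mem hres q x hg]) y⁻¹]

theorem coe_lift_comp_cosetSum (j : S →ₗ[MonoidAlgebra k G] T) (q : T →ₗ[MonoidAlgebra k G] S) :
    ⇑(lift hres j ∘ₗ cosetSum hres q) = relTrace k G (j ∘ₗ q) := by
  ext t
  simp [cosetSum, cosetTerm_apply, lift_mk, relTrace_apply]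

theorem exists_retraction_of_relTrace_ne_zero [IsSimpleModule (MonoidAlgebra k Gt) T]
    (j : S →ₗ[MonoidAlgebra k G] T) (q : T →ₗ[MonoidAlgebra k G] S)
    (h : relTrace k G (j ∘ₗ q) ≠ 0) :
    ∃ (ι : T →ₗ[MonoidAlgebra k Gt] Ind k G S) (π : Ind k G S →ₗ[MonoidAlgebra k Gt] T),
      π ∘ₗ ι = LinearMap.id := by
  have hbij : Function.Bijective (lift hres j ∘ₗ cosetSum hres q) :=
    LinearMap.bijective_of_ne_zero fun h0 => h (by rw [← coe_lift_comp_cosetSum hres, h0]; rfl)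
  let φ := LinearEquiv.ofBijective _ hbij
  exact ⟨cosetSum hres q, φ.symm.toLinearMap ∘ₗ lift hres j, LinearMap.ext φ.symm_apply_apply⟩

end Ind

end Induction

theorem simple_is_summand_of_ind_simple_general
    (k : Type) [Field k] (p : ℕ) [Fact p.Prime] [CharP k p]
    (Gt : Type) [Group Gt] [Fintype Gt] (G : Subgroup Gt) [G.Normal]
    (hp : (Nat.card (Gt ⧸ G)).Coprime p)
    (T : Type) [AddCommGroup T] [Module (MonoidAlgebra k Gt) T]
    [IsSimpleModule (MonoidAlgebra k Gt) T] :
    ∃ (s : Type) (_ : AddCommGroup s) (_ : Module k s)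
      (_ : Module (MonoidAlgebra k ↥G) s) (_ : IsScalarTower k (MonoidAlgebra k ↥G) s),
      IsSimpleModule (MonoidAlgebra k ↥G) s ∧
      ∃ (ι : T →ₗ[MonoidAlgebra k Gt] Ind k G s)
        (π : Ind k G s →ₗ[MonoidAlgebra k Gt] T),
        π ∘ₗ ι = LinearMap.id := by
  classical
  let : Module k T := Module.compHom T (algebraMap k (MonoidAlgebra k Gt))
  let : Module (MonoidAlgebra k G) T := Module.compHom T (mapDomainRingHom k G.subtype)
  have hres (a : MonoidAlgebra k G) (t : T) : a • t = mapDomainRingHom k G.subtype a • t := rfl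
  have : IsScalarTower k (MonoidAlgebra k Gt) T := .of_algebraMap_smul fun _ _ => rfl
  have : IsScalarTower k (MonoidAlgebra k G) T := .of_algebraMap_smul fun c t => by
    rw [hres, ← RingHom.comp_apply, mapDomainRingHom_comp_algebraMap]; rfl
  have : Module.Finite k T := .trans (MonoidAlgebra k Gt) T
  have : IsArtinian (MonoidAlgebra k G) T := isArtinian_of_tower k inferInstance
  have := isSemisimpleModule_restrict hres
  have := IsSimpleModule.nontrivial (MonoidAlgebra k Gt) T
  have hcard : (Nat.card (Gt ⧸ G) : k) ≠ 0 := fun h =>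
    (Fact.out : p.Prime).ne_one (hp.symm.eq_one_of_dvd ((CharP.cast_eq_zero_iff k p _).1 h))
  obtain ⟨s, q, hs, hsq⟩ :=
    exists_relTrace_subtype_comp_ne_zero (relTrace_id_ne_zero (T := T) hcard)
  obtain ⟨ι, π, hπι⟩ := Ind.exists_retraction_of_relTrace_ne_zero hres s.subtype q hsq
  exact ⟨s, _, _, _, _, hs, ι, π, hπι⟩

theorem simple_is_summand_of_ind_simple
    (k : Type) [Field k] [IsAlgClosed k] (p : ℕ) [Fact p.Prime] [CharP k p]
    (Gt : Type) [Group Gt] [Fintype Gt] (G : Subgroup Gt) [G.Normal]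
    (hp : (Nat.card (Gt ⧸ G)).Coprime p)
    (T : Type) [AddCommGroup T] [Module (MonoidAlgebra k Gt) T]
    [IsSimpleModule (MonoidAlgebra k Gt) T] :
    ∃ (s : Type) (_ : AddCommGroup s) (_ : Module k s)
      (_ : Module (MonoidAlgebra k ↥G) s) (_ : IsScalarTower k (MonoidAlgebra k ↥G) s),
      IsSimpleModule (MonoidAlgebra k ↥G) s ∧
      ∃ (ι : T →ₗ[MonoidAlgebra k Gt] Ind k G s)
        (π : Ind k G s →ₗ[MonoidAlgebra k Gt] T),
        π ∘ₗ ι = LinearMap.id :=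
  simple_is_summand_of_ind_simple_general k p Gt G hp T
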